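/- arXiv:2303.03294 — 4 statements merged into one kernel-verified Lean document; each statement's English description precedes it below -/
import Mathlib

section
/- For all integers N, r0, s, d0, d1, ℓ with s·d0·d1 − r0·ℓ = 1, letting t^N = [[1,0,0],[N,1,0],[N²·r0·s, 2N·r0·s, 1]] and φ_E the matrix [[d0²s, 2d0·s·r0, r0],[d0·ℓ, 2d0·d1·s−1, d1],[ℓ²·r0, 2d1·s·ℓ·r0, d1²·s]], the product t^N·φ_E equals the matrix obtained from φ_E by replacing ℓ with ℓ + N·s·d0 and d1 with d1 + N·r0. -/
theorem stmt_3 (N r0 s d0 d1 l : ℤ) (h : s * d0 * d1 - r0 * l = 1) :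
    (!![(1:ℤ), 0, 0;
        N, 1, 0;
        N^2*r0*s, 2*N*r0*s, 1]) *
    (!![d0^2*s, 2*d0*s*r0, r0;
        d0*l, 2*d0*d1*s - 1, d1;
        l^2*r0, 2*d1*s*l*r0, d1^2*s]) =
    (!![d0^2*s, 2*d0*s*r0, r0;
        d0*(l + N*s*d0), 2*d0*(d1 + N*r0)*s - 1, d1 + N*r0;
        (l + N*s*d0)^2*r0, 2*(d1 + N*r0)*s*(l + N*s*d0)*r0, (d1 + N*r0)^2*s]) := by
  ext i j
  fin_cases i <;> fin_cases j <;>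
    simp [Matrix.mul_apply, Fin.sum_univ_succ]
  all_goals first
    | ring1
    | linear_combination (2*N*r0*s)*h
end

section
/- The rank-2 integer quadratic forms with Gram matrices [[188,0],[0,−2]] and [[−12,−4],[−4,30]] are equivalent over ℤ. -/
theorem stmt_7 :
    ∃ P : Matrix (Fin 2) (Fin 2) ℤ, IsUnit P.det ∧
      P.transpose * !![(188:ℤ),0;0,-2] * P = !![(-12:ℤ),-4;-4,30] := by
  refine ⟨!![1,2;10,19], ?_, ?_⟩
  · simp [Matrix.det_fin_two]
  · norm_num [Matrix.mul_fin_two, Matrix.transpose]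
    ext i j; fin_cases i <;> fin_cases j <;> simp [Matrix.mul_apply, Fin.sum_univ_succ]
end

section
/- The binary quadratic form [[8,15],[15,10]] does not represent 2, i.e., there are no integers x, y with 8x² + 30xy + 10y² = 2. -/
/-- Finite base check: for `a ≤ 96`, if `145 a² + 16` is a perfect square `b²`,
then the mod-8 congruences fail. -/
lemma base_check : ∀ a : ℕ, a < 97 → ∀ k : ℕ, k < 6 →
    (12 * a + k) ^ 2 = 145 * a ^ 2 + 16 →
    (a + (12 * a + k)) % 8 ≠ 0 ∧ a % 8 ≠ (12 * a + k) % 8 := by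
  decide

/-- Core descent lemma. -/
lemma key : ∀ n : ℕ, ∀ z y : ℤ, y.natAbs ≤ n → z ^ 2 = 145 * y ^ 2 + 16 →
    ((8:ℤ) ∣ z + y ∨ (8:ℤ) ∣ z - y) → False := by
  intro n
  induction n with
  | zero =>
    intro z y hn heq hc
    have hy : y = 0 := by omega
    subst hy
    have h4 : (z - 4) * (z + 4) = 0 := by linear_combination heq
    rcases mul_eq_zero.mp h4 with h | h <;> omega
  | succ n ih =>
    -- first, a sign-normalized core argument
    have core : ∀ z y : ℤ, 0 ≤ z → 0 ≤ y → y.natAbs ≤ n + 1 →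
        z ^ 2 = 145 * y ^ 2 + 16 → ((8:ℤ) ∣ z + y ∨ (8:ℤ) ∣ z - y) → False := by
      intro z y hz hy hn heq hc
      by_cases h96 : y ≤ 96
      · -- finite check via naturals
        obtain ⟨a, rfl⟩ : ∃ a : ℕ, y = (a : ℤ) := ⟨y.toNat, (Int.toNat_of_nonneg hy).symm⟩
        obtain ⟨b, rfl⟩ : ∃ b : ℕ, z = (b : ℤ) := ⟨z.toNat, (Int.toNat_of_nonneg hz).symm⟩
        have ha : a < 97 := by exact_mod_cast by omega
        have heqn : b ^ 2 = 145 * a ^ 2 + 16 := by exact_mod_cast heq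
        have hblo : 12 * a ≤ b := by nlinarith
        have hbhi : b < 12 * a + 6 := by nlinarith
        obtain ⟨k, hk, rfl⟩ : ∃ k : ℕ, k < 6 ∧ b = 12 * a + k :=
          ⟨b - 12 * a, by omega, by omega⟩
        obtain ⟨h1, h2⟩ := base_check a ha k hk heqn
        rcases hc with h | h <;> omega
      · -- descent step: y ≥ 97
        push_neg at h96
        have hy97 : (97:ℤ) ≤ y := by omega
        set z' : ℤ := 289 * z - 3480 * y with hz'
        set y' : ℤ := 289 * y - 24 * z with hy'
        have h12 : 12 * y < z := by
          by_contra h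
          push_neg at h
          nlinarith
        have hy'pos : 0 < y' := by nlinarith
        have hy'lt : y' < y := by simp only [hy']; linarith
        have heq' : z' ^ 2 = 145 * y' ^ 2 + 16 := by
          simp only [hz', hy']; linear_combination heq
        have hc' : (8:ℤ) ∣ z' + y' ∨ (8:ℤ) ∣ z' - y' := by
          simp only [hz', hy']; omega
        have hn' : y'.natAbs ≤ n := by omega
        exact ih z' y' hn' heq' hc'
    intro z y hn heq hc
    rcases le_total 0 z with hz | hz <;> rcases le_total 0 y with hy | hy
    · exact core z y hz hy hn heq hc
    · exact core z (-y) hz (by omega) (by omega) (by linear_combination heq)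
        (by omega)
    · exact core (-z) y (by omega) hy hn (by linear_combination heq)
        (by omega)
    · exact core (-z) (-y) (by omega) (by omega) (by omega) (by linear_combination heq)
        (by omega)

theorem stmt_17 : ¬ ∃ x y : ℤ, 8 * x ^ 2 + 30 * x * y + 10 * y ^ 2 = 2 := by
  rintro ⟨x, y, h⟩
  apply key ((y : ℤ).natAbs) (8 * x + 15 * y) y le_rfl
  · linear_combination 8 * h
  · left
    exact ⟨x + 2 * y, by ring⟩
end

section
/- The binary quadratic forms [[2,13],[13,12]] and [[8,15],[15,10]] are not equivalent over ℤ. -/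
/-- Descent lemma: every nonnegative solution of `u² = 145 v² + 16` satisfies
`u ≡ 4` and `v ≡ 0` mod 8 (solutions are `4·(289+24√145)^k`). -/
lemma pell_core : ∀ (n : ℕ) (u v : ℤ), 0 ≤ u → 0 ≤ v → v.natAbs = n →
    u * u = 145 * (v * v) + 16 → u % 8 = 4 ∧ v % 8 = 0 := by
  intro n
  induction n using Nat.strong_induction_on with
  | _ n ih =>
    intro u v hu hv hn h
    by_cases hsmall : v ≤ 3
    · have hub : u ≤ 37 := by nlinarith
      interval_cases v <;> interval_cases u <;> omega
    · push_neg at hsmall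
      set U : ℤ := 289 * u - 3480 * v with hUdef
      set V : ℤ := 289 * v - 24 * u with hVdef
      have hprod : (289 * u + 3480 * v) * (289 * u - 3480 * v)
          = 145 * (v * v) + 1336336 := by linear_combination 83521 * h
      have hsum : 0 < 289 * u + 3480 * v := by nlinarith
      have hU0 : 0 ≤ U := by nlinarith
      have hVlt : V < v := by nlinarith
      have hVgt : -v < V := by nlinarith
      have hUV : U * U = 145 * (V * V) + 16 := by
        rw [hUdef, hVdef]; linear_combination h
      have habs : V.natAbs < n := by omega
      have hWa : (V.natAbs : ℤ) = V ∨ (V.natAbs : ℤ) = -V := by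
        rcases Int.natAbs_eq V with h' | h'
        · left; omega
        · right; omega
      have hW0 : (0:ℤ) ≤ (V.natAbs : ℤ) := Int.natCast_nonneg _
      have hWsq : (V.natAbs : ℤ) * (V.natAbs : ℤ) = V * V := by
        rcases hWa with h' | h' <;> rw [h'] <;> ring_nf
      have hres := ih V.natAbs habs U (V.natAbs : ℤ) hU0 hW0
        (Int.natAbs_natCast _) (by rw [hWsq]; exact hUV)
      have hrecu : u = 289 * U + 3480 * V := by rw [hUdef, hVdef]; ring
      have hrecv : v = 24 * U + 289 * V := by rw [hUdef, hVdef]; ring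
      omega

lemma pell16 (u v : ℤ) (h : u * u = 145 * (v * v) + 16) :
    u % 8 = 4 ∧ v % 8 = 0 := by
  have h1 : |u| * |u| = u * u := abs_mul_abs_self u
  have h2 : |v| * |v| = v * v := abs_mul_abs_self v
  have := pell_core (|v|).natAbs |u| |v| (abs_nonneg u) (abs_nonneg v) rfl
    (by rw [h1, h2]; exact h)
  have hau : u = |u| ∨ u = -|u| := by rcases abs_choice u with h' | h' <;> omega
  have hav : v = |v| ∨ v = -|v| := by rcases abs_choice v with h' | h' <;> omega
  rcases hau with h' | h' <;> rcases hav with h'' | h'' <;> omega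

/-- The form `8x² + 30xy + 10y²` (i.e. `!![8,15;15,10]`) does not represent 2. -/
lemma nosol (x y : ℤ) : 8 * x * x + 30 * x * y + 10 * y * y ≠ 2 := by
  intro h
  have h2 : (8 * x + 15 * y) * (8 * x + 15 * y) = 145 * (y * y) + 16 := by
    linear_combination 8 * h
  obtain ⟨h3, h4⟩ := pell16 (8 * x + 15 * y) y h2
  omega

theorem stmt_18 :
    ¬ ∃ P : Matrix (Fin 2) (Fin 2) ℤ, IsUnit P.det ∧
      P.transpose * !![(2:ℤ),13;13,12] * P = !![(8:ℤ),15;15,10] := by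
  rintro ⟨P, hdet, hP⟩
  have hPQ : P * P⁻¹ = 1 := Matrix.mul_nonsing_inv P hdet
  have hQP : P⁻¹ * P = 1 := Matrix.nonsing_inv_mul P hdet
  have h2 : !![(2:ℤ),13;13,12] = (P⁻¹).transpose * !![(8:ℤ),15;15,10] * P⁻¹ := by
    rw [← hP]
    have e1 : (P⁻¹).transpose * (P.transpose * !![(2:ℤ),13;13,12] * P) * P⁻¹
        = (P * P⁻¹).transpose * !![(2:ℤ),13;13,12] * (P * P⁻¹) := by
      rw [Matrix.transpose_mul]
      noncomm_ring
    rw [e1, hPQ, Matrix.transpose_one, Matrix.one_mul, Matrix.mul_one]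
  have h00 := congrArg (fun M => M 0 0) h2
  simp [Matrix.mul_apply, Fin.sum_univ_two] at h00
  set s := P⁻¹ 0 0
  set t := P⁻¹ 1 0
  exact nosol s t (by linear_combination h00.symm)
end
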